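/- Let g be a real semisimple Lie algebra with Iwasawa decomposition data as above, α a simple root, and ξ ∈ g_α with ⟨ξ,ξ⟩ = 1. The trace of the second fundamental form of the subgroup S_ξ with Lie algebra s_ξ = ker α ⊕ (n ⊖ ℝξ) in AN at the identity equals (dim g_α + 2 dim g_{2α} - 1) H_α; that is, Σ_i II(e_i,e_i) = (dim g_α + 2 dim g_{2α} - 1) H_α for any orthonormal basis {e_i} of s_ξ with respect to ⟨·,·⟩_{AN}. -/

import Mathlib

/-!
The mean curvature vector `M = Σ II(eᵢ,eᵢ)` lies in `span {H_α, ξ}`, and `H_α ⊥ ξ` for the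
`AN`-metric, so `M` is determined by its pairings with `H_α` and `ξ`. Each pairing is the trace
over `s_ξ` of the quadratic form `X ↦ ¼⟨(1-θ)[θX,X], η⟩`, hence independent of the orthonormal
basis. In a basis adapted to `s_ξ = (a ∩ ker α) ⊕ ⨁_λ (g_λ ∩ ξ^⊥)` the vectors in `a` contribute
nothing and each unit vector of `g_λ ∩ ξ^⊥` contributes `⟨H_λ, η⟩`. As `ξ^⊥` only cuts one
dimension out of `g_α`, the pairing with `ξ` vanishes and the pairing with `H_α` is
`2⟨δ,α⟩ - |α|² = (dim g_α + 2 dim g_{2α} - 1)|α|²`.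
-/

/-- The inner product `⟨X,Y⟩ = -B(X, θY)` associated with a Cartan involution `θ`. -/
noncomputable def cip (L : Type*) [LieRing L] [LieAlgebra ℝ L]
    (θ : L →ₗ⁅ℝ⁆ L) (X Y : L) : ℝ :=
  -(killingForm ℝ L X (θ Y))

/-- The left-invariant metric of `AN`. -/
noncomputable def cipAN (L : Type*) [LieRing L] [LieAlgebra ℝ L]
    (θ : L →ₗ⁅ℝ⁆ L) (Pa Pn : L →ₗ[ℝ] L) (X Y : L) : ℝ :=
  cip L θ (Pa X) (Pa Y) + (1 / 2) * cip L θ (Pn X) (Pn Y)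

open Module

theorem Finset.sup_inf_eq_sup_inf_of_le {α ι : Type*} [Lattice α] [OrderBot α]
    [IsModularLattice α] [DecidableEq ι] {s : Finset ι} {g : ι → α} {i₀ : ι} {k : α} (hi₀ : i₀ ∈ s)
    (hle : ∀ i ∈ s, i ≠ i₀ → g i ≤ k) :
    s.sup g ⊓ k = s.sup fun i => g i ⊓ k := by
  have hrest : (s.erase i₀).sup (fun i => g i ⊓ k) = (s.erase i₀).sup g :=
    Finset.sup_congr rfl fun i hi =>
      inf_eq_left.2 (hle i (Finset.mem_of_mem_erase hi) (Finset.ne_of_mem_erase hi))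
  have hle' : (s.erase i₀).sup g ≤ k :=
    Finset.sup_le fun i hi => hle i (Finset.mem_of_mem_erase hi) (Finset.ne_of_mem_erase hi)
  rw [← Finset.insert_erase hi₀, Finset.sup_insert, Finset.sup_insert, hrest, sup_comm,
    sup_inf_assoc_of_le _ hle', sup_comm]

section LinearAlgebra

variable {V : Type*} [AddCommGroup V] [Module ℝ V]

theorem Submodule.finrank_inf_ker_add_one
    (W : Submodule ℝ V) [FiniteDimensional ℝ W] (f : V →ₗ[ℝ] ℝ) {x : V} (hxW : x ∈ W)
    (hfx : f x ≠ 0) : finrank ℝ ↥(W ⊓ LinearMap.ker f) + 1 = finrank ℝ W := by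
  have hf : f.comp W.subtype ≠ 0 := fun h => hfx (by simpa using LinearMap.congr_fun h ⟨x, hxW⟩)
  rw [← Module.Dual.finrank_ker_add_one_of_ne_zero hf, LinearMap.ker_comp,
    ← (Submodule.comapSubtypeEquivOfLe (inf_le_left : W ⊓ LinearMap.ker f ≤ W)).finrank_eq,
    Submodule.comap_inf, Submodule.comap_subtype_self, top_inf_eq]

theorem exists_orthonormal_family_of_pos [FiniteDimensional ℝ V] (φ : LinearMap.BilinForm ℝ V)
    (hsymm : ∀ x y, φ x y = φ y x) (W : Submodule ℝ V) (hpos : ∀ x ∈ W, x ≠ 0 → 0 < φ x x) :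
    ∃ f : Fin (finrank ℝ W) → V,
      (∀ i j, φ (f i) (f j) = if i = j then 1 else 0) ∧ Submodule.span ℝ (Set.range f) = W := by
  let core : InnerProductSpace.Core ℝ W :=
    { inner := fun x y => φ x y
      conj_inner_symm := fun x y => hsymm y x
      re_inner_nonneg := fun x => by
        rcases eq_or_ne x 0 with rfl | hx
        · simp
        · exact (hpos x x.2 (by simpa using hx)).le
      add_left := fun x y z => by simp
      smul_left := fun x y r => by simp
      definite := fun x hx => by
        by_contra h
        exact (hpos x x.2 (by simpa using h)).ne' hx }
  let _ : NormedAddCommGroup W := core.toNormedAddCommGroup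
  let _ : InnerProductSpace ℝ W := InnerProductSpace.ofCore core.toCore
  let b := stdOrthonormalBasis ℝ W
  refine ⟨fun i => b i, orthonormal_iff_ite.1 b.orthonormal, ?_⟩
  rw [show Set.range (fun i => (b i : V)) = W.subtype '' Set.range b by
      rw [← Set.range_comp]; rfl,
    Submodule.span_image, ← b.coe_toBasis, b.toBasis.span_eq, Submodule.map_subtype_top]

theorem exists_orthonormal_sigma_family [FiniteDimensional ℝ V] (φ : LinearMap.BilinForm ℝ V)
    (hsymm : ∀ x y, φ x y = φ y x) {ι : Type*} [DecidableEq ι] (W : ι → Submodule ℝ V)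
    (hpos : ∀ k, ∀ x ∈ W k, x ≠ 0 → 0 < φ x x)
    (horth : Pairwise fun k l => ∀ x ∈ W k, ∀ y ∈ W l, φ x y = 0) :
    ∃ f : (Σ k, Fin (finrank ℝ (W k))) → V, (∀ p, f p ∈ W p.1) ∧
      (∀ p q, φ (f p) (f q) = if p = q then 1 else 0) ∧
      Submodule.span ℝ (Set.range f) = ⨆ k, W k := by
  choose f hf hspan using fun k => exists_orthonormal_family_of_pos φ hsymm (W k) (hpos k)
  have hmem : ∀ p : Σ k, Fin (finrank ℝ (W k)), f p.1 p.2 ∈ W p.1 := fun p =>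
    hspan p.1 ▸ Submodule.subset_span ⟨p.2, rfl⟩
  refine ⟨fun p => f p.1 p.2, hmem, ?_, ?_⟩
  · rintro ⟨k, i⟩ ⟨l, j⟩
    by_cases hkl : k = l
    · subst hkl
      simp [hf]
    · rw [horth hkl _ (hmem ⟨k, i⟩) _ (hmem ⟨l, j⟩), if_neg fun h => hkl (congrArg Sigma.fst h)]
  · rw [Set.range_sigma_eq_iUnion_range, Submodule.span_iUnion]
    exact iSup_congr hspan

theorem sum_smul_eq_of_orthonormal (φ : LinearMap.BilinForm ℝ V) {ι : Type*} [Fintype ι]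
    [DecidableEq ι] {e : ι → V} (he : ∀ i j, φ (e i) (e j) = if i = j then 1 else 0) {x : V}
    (hx : x ∈ Submodule.span ℝ (Set.range e)) : ∑ i, φ (e i) x • e i = x := by
  obtain ⟨c, rfl⟩ := (Submodule.mem_span_range_iff_exists_fun ℝ).1 hx
  simp [map_sum, he]

theorem sum_apply_self_eq_of_orthonormal {M : Type*} [AddCommGroup M] [Module ℝ M]
    (φ : LinearMap.BilinForm ℝ V) (hsymm : ∀ x y, φ x y = φ y x) (Φ : V →ₗ[ℝ] V →ₗ[ℝ] M)
    {ι κ : Type*} [Fintype ι] [DecidableEq ι] [Fintype κ] [DecidableEq κ] {e : ι → V}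
    {f : κ → V} (he : ∀ i j, φ (e i) (e j) = if i = j then 1 else 0)
    (hf : ∀ i j, φ (f i) (f j) = if i = j then 1 else 0)
    (hspan : Submodule.span ℝ (Set.range e) = Submodule.span ℝ (Set.range f)) :
    ∑ i, Φ (e i) (e i) = ∑ j, Φ (f j) (f j) := by
  have hef : ∀ i, ∑ j, φ (f j) (e i) • f j = e i := fun i =>
    sum_smul_eq_of_orthonormal φ hf (hspan ▸ Submodule.subset_span ⟨i, rfl⟩)
  have hfe : ∀ j, ∑ i, φ (e i) (f j) • e i = f j := fun j =>
    sum_smul_eq_of_orthonormal φ he (hspan ▸ Submodule.subset_span ⟨j, rfl⟩)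
  calc ∑ i, Φ (e i) (e i) = ∑ i, Φ (e i) (∑ j, φ (f j) (e i) • f j) := by simp_rw [hef]
    _ = ∑ j, Φ (∑ i, φ (e i) (f j) • e i) (f j) := by
        simp only [map_sum, map_smul, LinearMap.sum_apply, LinearMap.smul_apply, hsymm (f _)]
        exact Finset.sum_comm
    _ = ∑ j, Φ (f j) (f j) := by simp_rw [hfe]

theorem eq_smul_of_mem_span_pair (φ : LinearMap.BilinForm ℝ V) {H ξ M : V} {c : ℝ}
    (hM : M ∈ Submodule.span ℝ {H, ξ}) (hHξ : φ H ξ = 0) (hξξ : φ ξ ξ ≠ 0)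
    (hHH : H ≠ 0 → φ H H ≠ 0) (hMξ : φ M ξ = 0) (hMH : φ M H = c * φ H H) : M = c • H := by
  obtain ⟨s, t, rfl⟩ := Submodule.mem_span_pair.1 hM
  obtain rfl : t = 0 := by simpa [hHξ, hξξ] using hMξ
  rcases eq_or_ne H 0 with rfl | hH
  · simp
  · have : s * φ H H = c * φ H H := by simpa using hMH
    rw [mul_right_cancel₀ (hHH hH) this, zero_smul, add_zero]

end LinearAlgebra

section Iwasawa

variable {L : Type*} [LieRing L] [LieAlgebra ℝ L]

noncomputable def cipForm (θ : L →ₗ⁅ℝ⁆ L) : LinearMap.BilinForm ℝ L :=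
  -(killingForm ℝ L).compl₂ (θ : L →ₗ[ℝ] L)

theorem cipForm_apply (θ : L →ₗ⁅ℝ⁆ L) (X Y : L) : cipForm θ X Y = cip L θ X Y := rfl

noncomputable def cipANForm (θ : L →ₗ⁅ℝ⁆ L) (Pa Pn : L →ₗ[ℝ] L) : LinearMap.BilinForm ℝ L :=
  (cipForm θ).compl₁₂ Pa Pa + (1 / 2 : ℝ) • (cipForm θ).compl₁₂ Pn Pn

theorem cipANForm_apply (θ : L →ₗ⁅ℝ⁆ L) (Pa Pn : L →ₗ[ℝ] L) (X Y : L) :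
    cipANForm θ Pa Pn X Y = cipAN L θ Pa Pn X Y := rfl

variable {θ : L →ₗ⁅ℝ⁆ L} {Pa Pn : L →ₗ[ℝ] L} {a n : Submodule ℝ L}

theorem cipAN_comm (hsymm : ∀ X Y : L, cip L θ X Y = cip L θ Y X) (X Y : L) :
    cipAN L θ Pa Pn X Y = cipAN L θ Pa Pn Y X := by
  simp only [cipAN, hsymm (Pa X), hsymm (Pn X)]

theorem cipAN_eq_cip_of_mem (hPaa : ∀ x ∈ a, Pa x = x ∧ Pn x = 0) {X Y : L} (hX : X ∈ a)
    (hY : Y ∈ a) : cipAN L θ Pa Pn X Y = cip L θ X Y := by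
  simp [cipAN, cip, hPaa X hX, hPaa Y hY]

theorem cipAN_eq_half_cip_of_mem (hPnn : ∀ x ∈ n, Pn x = x ∧ Pa x = 0) {X Y : L} (hX : X ∈ n)
    (hY : Y ∈ n) : cipAN L θ Pa Pn X Y = 1 / 2 * cip L θ X Y := by
  simp [cipAN, cip, hPnn X hX, hPnn Y hY]

theorem cipAN_eq_zero_of_mem_of_mem (hPaa : ∀ x ∈ a, Pa x = x ∧ Pn x = 0)
    (hPnn : ∀ x ∈ n, Pn x = x ∧ Pa x = 0) {X Y : L} (hX : X ∈ a) (hY : Y ∈ n) :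
    cipAN L θ Pa Pn X Y = 0 := by
  simp [cipAN, cip, (hPaa X hX).2, (hPnn Y hY).2]

theorem mem_ker_killingForm_flip_iff {ξ X : L} :
    X ∈ LinearMap.ker ((killingForm ℝ L).flip (θ ξ)) ↔ cip L θ X ξ = 0 :=
  neg_eq_zero.symm

variable {Sigp : Finset (L →ₗ[ℝ] ℝ)} {gsp : (L →ₗ[ℝ] ℝ) → Submodule ℝ L}

/-- The summands of `s_ξ = (a ∩ ker α) ⊕ ⨁_{λ ∈ Σ⁺} (g_λ ∩ K)` for `K = ξ^⊥`. -/
def sXiSummand (a : Submodule ℝ L) (αl : L →ₗ[ℝ] ℝ) (gsp : (L →ₗ[ℝ] ℝ) → Submodule ℝ L)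
    (K : Submodule ℝ L) (o : Option Sigp) : Submodule ℝ L :=
  o.elim (a ⊓ LinearMap.ker αl) fun lam => gsp lam ⊓ K

theorem exists_orthonormal_family_sXiSummand [FiniteDimensional ℝ L]
    [DecidableEq (L →ₗ[ℝ] ℝ)]
    (hpos : ∀ X : L, X ≠ 0 → 0 < cip L θ X X) (hsymm : ∀ X Y : L, cip L θ X Y = cip L θ Y X)
    (hPaa : ∀ x ∈ a, Pa x = x ∧ Pn x = 0) (hPnn : ∀ x ∈ n, Pn x = x ∧ Pa x = 0)
    (hgspn : ∀ lam ∈ Sigp, gsp lam ≤ n)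
    (horthroots : ∀ lam ∈ Sigp, ∀ mu ∈ Sigp, lam ≠ mu →
      ∀ X ∈ gsp lam, ∀ Y ∈ gsp mu, cip L θ X Y = 0)
    (αl : L →ₗ[ℝ] ℝ) (K : Submodule ℝ L) :
    ∃ F : (Σ o : Option Sigp, Fin (finrank ℝ (sXiSummand a αl gsp K o))) → L,
      (∀ p, F p ∈ sXiSummand a αl gsp K p.1) ∧
      (∀ p q, cipAN L θ Pa Pn (F p) (F q) = if p = q then 1 else 0) ∧
      Submodule.span ℝ (Set.range F) =
        (a ⊓ LinearMap.ker αl) ⊔ Sigp.sup fun lam => gsp lam ⊓ K := by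
  have hmem_n : ∀ (lam : Sigp), ∀ X ∈ gsp lam ⊓ K, X ∈ n := fun lam X hX =>
    hgspn lam lam.2 (Submodule.mem_inf.1 hX).1
  have hposAN : ∀ o : Option Sigp, ∀ X ∈ sXiSummand a αl gsp K o, X ≠ 0 →
      0 < cipANForm θ Pa Pn X X := by
    rintro (_ | lam) X hX hX0
    · rw [cipANForm_apply, cipAN_eq_cip_of_mem hPaa (Submodule.mem_inf.1 hX).1
        (Submodule.mem_inf.1 hX).1]
      exact hpos X hX0
    · rw [cipANForm_apply, cipAN_eq_half_cip_of_mem hPnn (hmem_n lam X hX) (hmem_n lam X hX)]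
      have := hpos X hX0
      positivity
  have horthAN : Pairwise fun o o' : Option Sigp => ∀ X ∈ sXiSummand a αl gsp K o,
      ∀ Y ∈ sXiSummand a αl gsp K o', cipANForm θ Pa Pn X Y = 0 := by
    rintro (_ | lam) (_ | mu) hne X hX Y hY
    · exact absurd rfl hne
    · exact cipAN_eq_zero_of_mem_of_mem hPaa hPnn (Submodule.mem_inf.1 hX).1 (hmem_n mu Y hY)
    · rw [cipANForm_apply, cipAN_comm hsymm]
      exact cipAN_eq_zero_of_mem_of_mem hPaa hPnn (Submodule.mem_inf.1 hY).1 (hmem_n lam X hX)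
    · rw [cipANForm_apply, cipAN_eq_half_cip_of_mem hPnn (hmem_n lam X hX) (hmem_n mu Y hY),
        horthroots lam lam.2 mu mu.2 (fun h => hne (congrArg some (Subtype.ext h))) X
          (Submodule.mem_inf.1 hX).1 Y (Submodule.mem_inf.1 hY).1, mul_zero]
  obtain ⟨F, hFmem, hFon, hFspan⟩ :=
    exists_orthonormal_sigma_family _ (cipAN_comm hsymm) _ hposAN horthAN
  refine ⟨F, hFmem, hFon, ?_⟩
  rw [hFspan, Finset.sup_eq_iSup, iSup_subtype']
  exact iSup_option_elim _ _

theorem sum_sff_eq_sum_finrank_mul_cip {Hd : (L →ₗ[ℝ] ℝ) → L} {αl : L →ₗ[ℝ] ℝ} {K : Submodule ℝ L}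
    (hap : ∀ H ∈ a, θ H = -H) (hPnn : ∀ x ∈ n, Pn x = x ∧ Pa x = 0)
    (hgspn : ∀ lam ∈ Sigp, gsp lam ≤ n)
    (hbrD : ∀ lam ∈ Sigp, ∀ X ∈ gsp lam,
      ⁅θ X, X⁆ - θ ⁅θ X, X⁆ = (2 * cip L θ X X) • Hd lam)
    (F : (Σ o : Option Sigp, Fin (finrank ℝ (sXiSummand a αl gsp K o))) → L)
    (hFmem : ∀ p, F p ∈ sXiSummand a αl gsp K p.1)
    (hFnorm : ∀ p, cipAN L θ Pa Pn (F p) (F p) = 1) (η : L) :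
    ∑ p, 1 / 4 * cip L θ (⁅θ (F p), F p⁆ - θ ⁅θ (F p), F p⁆) η =
      ∑ lam ∈ Sigp, (finrank ℝ ↥(gsp lam ⊓ K) : ℝ) * cip L θ (Hd lam) η := by
  have hterm : ∀ p, 1 / 4 * cip L θ (⁅θ (F p), F p⁆ - θ ⁅θ (F p), F p⁆) η =
      p.1.elim 0 fun lam => cip L θ (Hd lam) η := by
    rintro ⟨_ | lam, j⟩
    · rw [hap _ (Submodule.mem_inf.1 (hFmem ⟨none, j⟩)).1, neg_lie, lie_self, neg_zero, map_zero,
        sub_zero]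
      simp [cip]
    · have hg : F ⟨some lam, j⟩ ∈ gsp lam := (Submodule.mem_inf.1 (hFmem ⟨some lam, j⟩)).1
      have hnorm : cip L θ (F ⟨some lam, j⟩) (F ⟨some lam, j⟩) = 2 := by
        have := hFnorm ⟨some lam, j⟩
        rw [cipAN_eq_half_cip_of_mem hPnn (hgspn lam lam.2 hg) (hgspn lam lam.2 hg)] at this
        linarith
      rw [hbrD lam lam.2 _ hg, hnorm, ← cipForm_apply, map_smul]
      simp only [LinearMap.smul_apply, smul_eq_mul, cipForm_apply, Option.elim]
      ring
  rw [Fintype.sum_congr _ _ hterm, Fintype.sum_sigma, Fintype.sum_option]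
  simp only [Option.elim, Finset.sum_const_zero, zero_add, Finset.sum_const, Finset.card_univ,
    Fintype.card_fin, nsmul_eq_mul]
  exact Finset.sum_coe_sort Sigp fun lam => (finrank ℝ ↥(gsp lam ⊓ K) : ℝ) * cip L θ (Hd lam) η

theorem sum_finrank_inf_mul_cip_eq {Hd : (L →ₗ[ℝ] ℝ) → L} {αl : L →ₗ[ℝ] ℝ} {Hα : L}
    {K : Submodule ℝ L} (hαl : αl ∈ Sigp) (hHα : Hα = Hd αl)
    (hdelta : cip L θ (∑ lam ∈ Sigp, (finrank ℝ (gsp lam) : ℝ) • Hd lam) Hα =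
      cip L θ Hα Hα * ((finrank ℝ (gsp αl) : ℝ) + 2 * (finrank ℝ (gsp ((2 : ℝ) • αl)) : ℝ)))
    (hgspK : ∀ lam ∈ Sigp, lam ≠ αl → gsp lam ≤ K)
    (hdim : finrank ℝ ↥(gsp αl ⊓ K) + 1 = finrank ℝ (gsp αl)) :
    ∑ lam ∈ Sigp, (finrank ℝ ↥(gsp lam ⊓ K) : ℝ) * cip L θ (Hd lam) Hα =
      cip L θ Hα Hα *
        (((finrank ℝ (gsp αl) : ℝ) + 2 * (finrank ℝ (gsp ((2 : ℝ) • αl)) : ℝ)) - 1) := by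
  classical
  have hsum : cip L θ (∑ lam ∈ Sigp, (finrank ℝ (gsp lam) : ℝ) • Hd lam) Hα =
      ∑ lam ∈ Sigp, (finrank ℝ (gsp lam) : ℝ) * cip L θ (Hd lam) Hα := by
    simp only [← cipForm_apply, map_sum, map_smul, LinearMap.sum_apply, LinearMap.smul_apply,
      smul_eq_mul]
  have hrest : ∑ lam ∈ Sigp.erase αl, (finrank ℝ ↥(gsp lam ⊓ K) : ℝ) * cip L θ (Hd lam) Hα =
      ∑ lam ∈ Sigp.erase αl, (finrank ℝ (gsp lam) : ℝ) * cip L θ (Hd lam) Hα :=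
    Finset.sum_congr rfl fun lam hlam => by
      rw [inf_eq_left.2 (hgspK lam (Finset.mem_of_mem_erase hlam) (Finset.ne_of_mem_erase hlam))]
  have hdim' : (finrank ℝ ↥(gsp αl ⊓ K) : ℝ) = finrank ℝ (gsp αl) - 1 := by
    rw [← hdim]; push_cast; ring
  rw [hsum, ← Finset.add_sum_erase _ _ hαl, ← hHα] at hdelta
  rw [← Finset.add_sum_erase _ _ hαl, hrest, hdim', ← hHα]
  linear_combination hdelta

theorem cipAN_sum_II_eq_sum_finrank_mul_cip [FiniteDimensional ℝ L] {Hd : (L →ₗ[ℝ] ℝ) → L}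
    {αl : L →ₗ[ℝ] ℝ} {K : Submodule ℝ L}
    (hpos : ∀ X : L, X ≠ 0 → 0 < cip L θ X X) (hsymm : ∀ X Y : L, cip L θ X Y = cip L θ Y X)
    (hap : ∀ H ∈ a, θ H = -H)
    (hPaa : ∀ x ∈ a, Pa x = x ∧ Pn x = 0) (hPnn : ∀ x ∈ n, Pn x = x ∧ Pa x = 0)
    (hgspn : ∀ lam ∈ Sigp, gsp lam ≤ n)
    (horthroots : ∀ lam ∈ Sigp, ∀ mu ∈ Sigp, lam ≠ mu →
      ∀ X ∈ gsp lam, ∀ Y ∈ gsp mu, cip L θ X Y = 0)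
    (hbrD : ∀ lam ∈ Sigp, ∀ X ∈ gsp lam,
      ⁅θ X, X⁆ - θ ⁅θ X, X⁆ = (2 * cip L θ X X) • Hd lam)
    {ι : Type*} [Fintype ι] [DecidableEq ι] {e : ι → L}
    (he : ∀ i j, cipAN L θ Pa Pn (e i) (e j) = if i = j then 1 else 0)
    (hspan : Submodule.span ℝ (Set.range e) =
      (a ⊓ LinearMap.ker αl) ⊔ Sigp.sup fun lam => gsp lam ⊓ K)
    (II : L →ₗ[ℝ] L →ₗ[ℝ] L) {η : L}
    (hII : ∀ X ∈ Submodule.span ℝ (Set.range e),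
      cipAN L θ Pa Pn (II X X) η = 1 / 4 * cip L θ (⁅θ X, X⁆ - θ ⁅θ X, X⁆) η) :
    cipAN L θ Pa Pn (∑ i, II (e i) (e i)) η =
      ∑ lam ∈ Sigp, (finrank ℝ ↥(gsp lam ⊓ K) : ℝ) * cip L θ (Hd lam) η := by
  classical
  obtain ⟨F, hFmem, hFon, hFspan⟩ :=
    exists_orthonormal_family_sXiSummand hpos hsymm hPaa hPnn hgspn horthroots αl K
  have hspan_eq : Submodule.span ℝ (Set.range e) = Submodule.span ℝ (Set.range F) :=
    hspan.trans hFspan.symm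
  rw [sum_apply_self_eq_of_orthonormal (cipANForm θ Pa Pn) (cipAN_comm hsymm) II he hFon hspan_eq,
    ← cipANForm_apply, map_sum, LinearMap.sum_apply,
    ← sum_sff_eq_sum_finrank_mul_cip hap hPnn hgspn hbrD F hFmem fun p => by simpa using hFon p p]
  exact Finset.sum_congr rfl fun p _ => hII _ (hspan_eq ▸ Submodule.subset_span ⟨p, rfl⟩)

end Iwasawa

theorem mean_curvature_of_s_xi_general
    (L : Type*) [LieRing L] [LieAlgebra ℝ L] [FiniteDimensional ℝ L]
    (θ : L →ₗ⁅ℝ⁆ L)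
    (hpos : ∀ X : L, X ≠ 0 → 0 < cip L θ X X)
    (a n : Submodule ℝ L)
    (hap : ∀ H ∈ a, θ H = -H)
    (horthan : ∀ H ∈ a, ∀ X ∈ n, cip L θ H X = 0)
    (hsymm : ∀ X Y : L, cip L θ X Y = cip L θ Y X)
    -- positive restricted roots and root spaces
    (Sigp : Finset (L →ₗ[ℝ] ℝ))
    (gsp : (L →ₗ[ℝ] ℝ) → Submodule ℝ L)
    (hn : n = Sigp.sup gsp)
    (horthroots : ∀ lam ∈ Sigp, ∀ mu ∈ Sigp, lam ≠ mu →
      ∀ X ∈ gsp lam, ∀ Y ∈ gsp mu, cip L θ X Y = 0)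
    -- metric duals of the roots
    (Hd : (L →ₗ[ℝ] ℝ) → L)
    (hHd : ∀ lam ∈ Sigp, Hd lam ∈ a ∧ ∀ H ∈ a, cip L θ (Hd lam) H = lam H)
    -- `(1-θ)[θX,X] = 2|X|²H_λ` for `X ∈ g_λ`
    (hbrD : ∀ lam ∈ Sigp, ∀ X ∈ gsp lam,
      ⁅θ X, X⁆ - θ ⁅θ X, X⁆ = (2 * cip L θ X X) • Hd lam)
    -- the simple root `α`, its dual `H_α`, and the unit vector `ξ ∈ g_α`
    (αl : L →ₗ[ℝ] ℝ) (hαl : αl ∈ Sigp)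
    (Hα : L) (hHα : Hα = Hd αl)
    (ξ : L) (hξ : ξ ∈ gsp αl) (hnorm : cip L θ ξ ξ = 1)
    -- the identity `2⟨δ,α⟩ = |α|²(dim g_α + 2 dim g_{2α})`
    (hdelta : cip L θ (∑ lam ∈ Sigp, (Module.finrank ℝ (gsp lam) : ℝ) • Hd lam) Hα =
      cip L θ Hα Hα *
        ((Module.finrank ℝ (gsp αl) : ℝ) +
          2 * (Module.finrank ℝ (gsp ((2 : ℝ) • αl)) : ℝ)))
    -- projections defining the `AN`-metric
    (Pa Pn : L →ₗ[ℝ] L)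
    (hPaa : ∀ x ∈ a, Pa x = x ∧ Pn x = 0)
    (hPnn : ∀ x ∈ n, Pn x = x ∧ Pa x = 0)
    -- an orthonormal basis of `s_ξ = ker α ⊕ (n ⊖ ℝξ)` for the `AN`-metric
    (d : ℕ) (e : Fin d → L)
    (horthonormal : ∀ i j, cipAN L θ Pa Pn (e i) (e j) = if i = j then 1 else 0)
    (hspan : Submodule.span ℝ (Set.range e) =
      (a ⊓ LinearMap.ker αl) ⊔ (n ⊓ LinearMap.ker ((killingForm ℝ L).flip (θ ξ))))
    -- the second fundamental form of `S_ξ ⊆ AN` at the identity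
    (II : L →ₗ[ℝ] L →ₗ[ℝ] L)
    (hIIval : ∀ X ∈ (a ⊓ LinearMap.ker αl) ⊔
        (n ⊓ LinearMap.ker ((killingForm ℝ L).flip (θ ξ))),
      II X X ∈ Submodule.span ℝ {Hα, ξ})
    (hII : ∀ X ∈ (a ⊓ LinearMap.ker αl) ⊔
        (n ⊓ LinearMap.ker ((killingForm ℝ L).flip (θ ξ))),
      ∀ η ∈ Submodule.span ℝ {Hα, ξ},
      cipAN L θ Pa Pn (II X X) η = (1 / 4) * cip L θ (⁅θ X, X⁆ - θ ⁅θ X, X⁆) η) :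
    ∑ i, II (e i) (e i) =
      (((Module.finrank ℝ (gsp αl) : ℝ) +
          2 * (Module.finrank ℝ (gsp ((2 : ℝ) • αl)) : ℝ)) - 1) • Hα := by
  classical
  set K := LinearMap.ker ((killingForm ℝ L).flip (θ ξ))
  have hgspn : ∀ lam ∈ Sigp, gsp lam ≤ n := fun lam hlam => hn ▸ Finset.le_sup hlam
  have hgspK : ∀ lam ∈ Sigp, lam ≠ αl → gsp lam ≤ K := fun lam hlam hne X hX =>
    mem_ker_killingForm_flip_iff.2 (horthroots lam hlam αl hαl hne X hX ξ hξ)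
  have hξn : ξ ∈ n := hgspn αl hαl hξ
  have hHαa : Hα ∈ a := hHα ▸ (hHd αl hαl).1
  have hdim : finrank ℝ ↥(gsp αl ⊓ K) + 1 = finrank ℝ (gsp αl) :=
    Submodule.finrank_inf_ker_add_one _ _ hξ fun h =>
      zero_ne_one ((mem_ker_killingForm_flip_iff.1 (LinearMap.mem_ker.2 h)).symm.trans hnorm)
  have hspan' : Submodule.span ℝ (Set.range e) =
      (a ⊓ LinearMap.ker αl) ⊔ Sigp.sup fun lam => gsp lam ⊓ K := by
    rw [hspan, hn, Finset.sup_inf_eq_sup_inf_of_le hαl hgspK]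
  have hpair : ∀ η ∈ Submodule.span ℝ {Hα, ξ}, cipAN L θ Pa Pn (∑ i, II (e i) (e i)) η =
      ∑ lam ∈ Sigp, (finrank ℝ ↥(gsp lam ⊓ K) : ℝ) * cip L θ (Hd lam) η := fun η hη =>
    cipAN_sum_II_eq_sum_finrank_mul_cip hpos hsymm hap hPaa hPnn hgspn horthroots hbrD
      horthonormal hspan' II fun X hX => hII X (hspan ▸ hX) η hη
  refine eq_smul_of_mem_span_pair (cipANForm θ Pa Pn)
    (Submodule.sum_mem _ fun i _ => hIIval _ (hspan ▸ Submodule.subset_span ⟨i, rfl⟩))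
    (cipAN_eq_zero_of_mem_of_mem hPaa hPnn hHαa hξn)
    (by rw [cipANForm_apply, cipAN_eq_half_cip_of_mem hPnn hξn hξn, hnorm]; norm_num)
    (fun h => by rw [cipANForm_apply, cipAN_eq_cip_of_mem hPaa hHαa hHαa]; exact (hpos Hα h).ne')
    ?_ ?_
  · rw [cipANForm_apply, hpair ξ (Submodule.subset_span (Set.mem_insert_of_mem _ rfl))]
    exact Finset.sum_eq_zero fun lam hlam => by rw [horthan _ (hHd lam hlam).1 ξ hξn, mul_zero]
  · rw [cipANForm_apply, cipANForm_apply, hpair Hα (Submodule.subset_span (Set.mem_insert _ _)),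
      cipAN_eq_cip_of_mem hPaa hHαa hHαa, mul_comm]
    exact sum_finrank_inf_mul_cip_eq hαl hHα hdelta hgspK hdim

/-- The trace of the second fundamental form (= mean curvature vector at the identity) of
the subgroup `S_ξ` with Lie algebra `s_ξ = ker α ⊕ (n ⊖ ℝξ)` in `AN`, computed with
respect to an `⟨·,·⟩_{AN}`-orthonormal basis of `s_ξ`, equals
`(dim g_α + 2 dim g_{2α} - 1) H_α`. -/
theorem mean_curvature_of_s_xi
    (L : Type*) [LieRing L] [LieAlgebra ℝ L] [FiniteDimensional ℝ L]
    [LieAlgebra.IsSemisimple ℝ L]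
    (θ : L →ₗ⁅ℝ⁆ L) (hθ : Function.Involutive θ)
    (hpos : ∀ X : L, X ≠ 0 → 0 < cip L θ X X)
    (a n : Submodule ℝ L)
    (hap : ∀ H ∈ a, θ H = -H)
    (habelian : ∀ H ∈ a, ∀ H' ∈ a, ⁅H, H'⁆ = 0)
    (hnn : ∀ X ∈ n, ∀ Y ∈ n, ⁅X, Y⁆ ∈ n)
    (han : ∀ H ∈ a, ∀ X ∈ n, ⁅H, X⁆ ∈ n)
    (horthan : ∀ H ∈ a, ∀ X ∈ n, cip L θ H X = 0)
    (hsymm : ∀ X Y : L, cip L θ X Y = cip L θ Y X)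
    -- positive restricted roots and root spaces
    (Sigp : Finset (L →ₗ[ℝ] ℝ))
    (gsp : (L →ₗ[ℝ] ℝ) → Submodule ℝ L)
    (hroot : ∀ lam ∈ Sigp, ∀ X ∈ gsp lam, ∀ H ∈ a, ⁅H, X⁆ = lam H • X)
    (hbot : ∀ lam : L →ₗ[ℝ] ℝ, lam ∉ Sigp → gsp lam = ⊥)
    (hn : n = Sigp.sup gsp)
    (horthroots : ∀ lam ∈ Sigp, ∀ mu ∈ Sigp, lam ≠ mu →
      ∀ X ∈ gsp lam, ∀ Y ∈ gsp mu, cip L θ X Y = 0)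
    -- metric duals of the roots
    (Hd : (L →ₗ[ℝ] ℝ) → L)
    (hHd : ∀ lam ∈ Sigp, Hd lam ∈ a ∧ ∀ H ∈ a, cip L θ (Hd lam) H = lam H)
    -- `(1-θ)[θX,X] = 2|X|²H_λ` for `X ∈ g_λ`
    (hbrD : ∀ lam ∈ Sigp, ∀ X ∈ gsp lam,
      ⁅θ X, X⁆ - θ ⁅θ X, X⁆ = (2 * cip L θ X X) • Hd lam)
    -- the simple root `α`, its dual `H_α`, and the unit vector `ξ ∈ g_α`
    (αl : L →ₗ[ℝ] ℝ) (hαl : αl ∈ Sigp)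
    (Hα : L) (hHα : Hα = Hd αl)
    (ξ : L) (hξ : ξ ∈ gsp αl) (hnorm : cip L θ ξ ξ = 1)
    -- the identity `2⟨δ,α⟩ = |α|²(dim g_α + 2 dim g_{2α})`
    (hdelta : cip L θ (∑ lam ∈ Sigp, (Module.finrank ℝ (gsp lam) : ℝ) • Hd lam) Hα =
      cip L θ Hα Hα *
        ((Module.finrank ℝ (gsp αl) : ℝ) +
          2 * (Module.finrank ℝ (gsp ((2 : ℝ) • αl)) : ℝ)))
    -- projections defining the `AN`-metric
    (Pa Pn : L →ₗ[ℝ] L)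
    (hPaa : ∀ x ∈ a, Pa x = x ∧ Pn x = 0)
    (hPnn : ∀ x ∈ n, Pn x = x ∧ Pa x = 0)
    (hPmem : ∀ x : L, Pa x ∈ a ∧ Pn x ∈ n)
    -- an orthonormal basis of `s_ξ = ker α ⊕ (n ⊖ ℝξ)` for the `AN`-metric
    (d : ℕ) (e : Fin d → L)
    (he : ∀ i, e i ∈ (a ⊓ LinearMap.ker αl) ⊔
      (n ⊓ LinearMap.ker ((killingForm ℝ L).flip (θ ξ))))
    (horthonormal : ∀ i j, cipAN L θ Pa Pn (e i) (e j) = if i = j then 1 else 0)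
    (hspan : Submodule.span ℝ (Set.range e) =
      (a ⊓ LinearMap.ker αl) ⊔ (n ⊓ LinearMap.ker ((killingForm ℝ L).flip (θ ξ))))
    -- the second fundamental form of `S_ξ ⊆ AN` at the identity
    (II : L →ₗ[ℝ] L →ₗ[ℝ] L)
    (hIIval : ∀ X ∈ (a ⊓ LinearMap.ker αl) ⊔
        (n ⊓ LinearMap.ker ((killingForm ℝ L).flip (θ ξ))),
      II X X ∈ Submodule.span ℝ {Hα, ξ})
    (hII : ∀ X ∈ (a ⊓ LinearMap.ker αl) ⊔
        (n ⊓ LinearMap.ker ((killingForm ℝ L).flip (θ ξ))),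
      ∀ η ∈ Submodule.span ℝ {Hα, ξ},
      cipAN L θ Pa Pn (II X X) η = (1 / 4) * cip L θ (⁅θ X, X⁆ - θ ⁅θ X, X⁆) η) :
    ∑ i, II (e i) (e i) =
      (((Module.finrank ℝ (gsp αl) : ℝ) +
          2 * (Module.finrank ℝ (gsp ((2 : ℝ) • αl)) : ℝ)) - 1) • Hα :=
  mean_curvature_of_s_xi_general L θ hpos a n hap horthan hsymm Sigp gsp hn horthroots Hd hHd hbrD
    αl hαl Hα hHα ξ hξ hnorm hdelta Pa Pn hPaa hPnn d e horthonormal hspan II hIIval hII
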